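/- Let N ≥ 4, T ≥ 1, and K ≥ N − 1, and let data points x₁ < x₂ < ⋯ < x_N in ℝ and labels y₁, …, y_N ∈ ℝ^T be given. Suppose there exists i ∈ {2, …, N−2} such that the vectors s_i − s_{i−1} and s_{i+1} − s_i are both nonzero and aligned. Then the set of functions {f_θ : θ attains the minimum of problem (P)} is infinite; in particular, the solution to problem (P) is non-unique. -/

import Mathlib

/-!
Shallow univariate (input dimension 1) ReLU networks with `T` outputs,
width `K`, input weights `w k ∈ {−1, +1}`, and a residual connection.
-/

open scoped BigOperators
open Finset

noncomputable section

/-- Parameters of a width-`K`, `T`-output shallow ReLU network with residual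
connection, whose input weights are constrained to `{−1, +1}`. -/
structure ReLUParams (T K : ℕ) where
  v : Fin K → EuclideanSpace ℝ (Fin T)
  w : Fin K → ℝ
  b : Fin K → ℝ
  A : EuclideanSpace ℝ (Fin T)
  c : EuclideanSpace ℝ (Fin T)
  hw : ∀ k, w k = 1 ∨ w k = -1

/-- The network function `f_θ(x) = ∑ₖ vₖ (wₖ x + bₖ)₊ + A x + c`. -/
def nnFun {T K : ℕ} (θ : ReLUParams T K) (x : ℝ) : EuclideanSpace ℝ (Fin T) :=
  (∑ k : Fin K, max (θ.w k * x + θ.b k) 0 • θ.v k) + x • θ.A + θ.c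

/-- The objective of problem (P): `∑ₖ ‖vₖ‖₂`. -/
def cost {T K : ℕ} (θ : ReLUParams T K) : ℝ := ∑ k : Fin K, ‖θ.v k‖

/-- Slope vector `sᵢ = (y_{i+1} − yᵢ)/(x_{i+1} − xᵢ)` (0-indexed). -/
def slopeVec {T : ℕ} (x : ℕ → ℝ) (y : ℕ → EuclideanSpace ℝ (Fin T)) (i : ℕ) :
    EuclideanSpace ℝ (Fin T) :=
  (x (i + 1) - x i)⁻¹ • (y (i + 1) - y i)

/-- The connect-the-dots interpolant `f_D` of the data
`(x 0, y 0), …, (x (N-1), y (N-1))` (0-indexed): it interpolates the data, is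
affine on each interval `[xᵢ, x_{i+1}]`, is affine with slopeVec `s 0` on
`(−∞, x 0]` and affine with slopeVec `s (N-2)` on `[x (N-1), ∞)`. -/
def ctd {T : ℕ} (N : ℕ) (x : ℕ → ℝ) (y : ℕ → EuclideanSpace ℝ (Fin T)) (t : ℝ) :
    EuclideanSpace ℝ (Fin T) :=
  y 0 + (t - x 0) • slopeVec x y 0 +
    ∑ i ∈ Finset.Ico 1 (N - 1), max (t - x i) 0 • (slopeVec x y i - slopeVec x y (i - 1))

/-- Feasibility for problem (P): the network interpolates the data. -/
def Interpolates {T K : ℕ} (N : ℕ) (x : ℕ → ℝ) (y : ℕ → EuclideanSpace ℝ (Fin T))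
    (θ : ReLUParams T K) : Prop :=
  ∀ i < N, nnFun θ (x i) = y i

/-- `θ` attains the minimum of problem (P). -/
def IsMinimizer {T K : ℕ} (N : ℕ) (x : ℕ → ℝ) (y : ℕ → EuclideanSpace ℝ (Fin T))
    (θ : ReLUParams T K) : Prop :=
  Interpolates N x y θ ∧ ∀ θ' : ReLUParams T K, Interpolates N x y θ' → cost θ ≤ cost θ'

/-- Two vectors `u₁, u₂ ∈ ℝ^T` are aligned if `⟪u₁, u₂⟫ = ‖u₁‖₂ ‖u₂‖₂`. -/
def Aligned {T : ℕ} (u₁ u₂ : EuclideanSpace ℝ (Fin T)) : Prop :=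
  (inner ℝ u₁ u₂ : ℝ) = ‖u₁‖ * ‖u₂‖

/-!
Every interpolating network costs at least `∑ᵢ ‖sᵢ - sᵢ₋₁‖`: between consecutive data points
the slope of `f_θ` is `∑ₖ σₖ,ᵢ vₖ + a`, where `σₖ,ᵢ` is the slope of the `k`-th neuron; as the
neuron is convex with slopes in an interval of length `|wₖ| = 1`, the sequence `σₖ,ᵢ` is monotone
with total variation at most one. The connect-the-dots interpolant attains this bound.

When the kinks `δ₁ = sᵢ - sᵢ₋₁` and `δ₂ = sᵢ₊₁ - sᵢ` lie on a common ray, a vector `w` on that ray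
can be removed from both kinks and put back as a kink `2 • w` at the midpoint of `[xᵢ, xᵢ₊₁]`.
This subtracts a tent function times `w`, which vanishes at every data point, and it keeps the
cost, because `‖δ - w‖ = ‖δ‖ - ‖w‖` for `w` on the ray of `δ` with `‖w‖ ≤ ‖δ‖`. Different `w`
give different functions.
-/

lemma convexOn_max_affine_zero (w b : ℝ) :
    ConvexOn ℝ Set.univ (fun t : ℝ => max (w * t + b) 0) :=
  (((LinearMap.mul ℝ ℝ w).convexOn convex_univ).add_const b).sup (convexOn_const 0 convex_univ)

lemma slope_max_affine_zero_mem_Icc (w b : ℝ) {p q : ℝ} (hpq : p < q) :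
    slope (fun t : ℝ => max (w * t + b) 0) p q ∈ Set.Icc (min w 0) (max w 0) := by
  have hd : 0 < q - p := sub_pos.2 hpq
  rw [slope_def_field, Set.mem_Icc, le_div_iff₀ hd, div_le_iff₀ hd]
  constructor <;> rcases le_total 0 w with hw | hw <;>
    simp only [max_def, min_def] <;> split_ifs <;> nlinarith

lemma sum_range_abs_sub_eq_of_le_succ {σ : ℕ → ℝ} {n : ℕ} (hσ : ∀ i < n, σ i ≤ σ (i + 1)) :
    ∑ i ∈ range n, |σ (i + 1) - σ i| = σ n - σ 0 := by
  rw [← sum_range_sub]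
  exact sum_congr rfl fun i hi => abs_of_nonneg (sub_nonneg.2 (hσ i (mem_range.1 hi)))

lemma sum_abs_slope_sub_le_of_convexOn {f : ℝ → ℝ} (hf : ConvexOn ℝ Set.univ f) {a b : ℝ}
    (hab : ∀ p q, p < q → slope f p q ∈ Set.Icc a b) {x : ℕ → ℝ} {n : ℕ}
    (hx : ∀ i ≤ n, x i < x (i + 1)) :
    ∑ i ∈ range n, |slope f (x (i + 1)) (x (i + 2)) - slope f (x i) (x (i + 1))| ≤ b - a := by
  rw [sum_range_abs_sub_eq_of_le_succ (σ := fun i => slope f (x i) (x (i + 1))) fun i hi => by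
    simpa only [slope_def_field] using
      hf.slope_mono_adjacent (Set.mem_univ _) (Set.mem_univ _) (hx i hi.le) (hx (i + 1) hi)]
  linarith [(hab _ _ (hx n le_rfl)).2, (hab _ _ (hx 0 (Nat.zero_le n))).1]

lemma slope_nnFun {T K : ℕ} (θ : ReLUParams T K) {p q : ℝ} (hpq : p ≠ q) :
    slope (nnFun θ) p q =
      ∑ k, slope (fun t => max (θ.w k * t + θ.b k) 0) p q • θ.v k + θ.A := by
  have hdiff : nnFun θ q - nnFun θ p =
      ∑ k, (max (θ.w k * q + θ.b k) 0 - max (θ.w k * p + θ.b k) 0) • θ.v k + (q - p) • θ.A := by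
    simp only [nnFun, sub_smul, sum_sub_distrib]
    abel
  simp only [slope_def_module, hdiff, smul_add, smul_sum, smul_smul, smul_eq_mul,
    inv_mul_cancel₀ (sub_ne_zero.2 hpq.symm), one_smul]

theorem sum_norm_slopeVec_sub_le_cost {T K N : ℕ} (hN : 2 ≤ N) {x : ℕ → ℝ}
    {y : ℕ → EuclideanSpace ℝ (Fin T)} (hx : ∀ i, i + 1 < N → x i < x (i + 1))
    {θ : ReLUParams T K} (hθ : Interpolates N x y θ) :
    ∑ i ∈ Ico 1 (N - 1), ‖slopeVec x y i - slopeVec x y (i - 1)‖ ≤ cost θ := by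
  set σ : Fin K → ℕ → ℝ := fun k i =>
    slope (fun t => max (θ.w k * t + θ.b k) 0) (x i) (x (i + 1))
  have hs : ∀ i, i + 1 < N → slopeVec x y i = ∑ k, σ k i • θ.v k + θ.A := fun i hi => by
    rw [← slope_nnFun θ (hx i hi).ne, slope_def_module, slopeVec, hθ i (by omega), hθ (i + 1) hi]
  have hvar : ∀ k, ∑ i ∈ range (N - 2), |σ k (i + 1) - σ k i| ≤ 1 := fun k => calc
    _ ≤ max (θ.w k) 0 - min (θ.w k) 0 :=
      sum_abs_slope_sub_le_of_convexOn (convexOn_max_affine_zero _ _)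
        (fun _ _ => slope_max_affine_zero_mem_Icc _ _) fun i hi => hx i (by omega)
    _ = 1 := by
      rw [max_sub_min_eq_abs', sub_zero]
      rcases θ.hw k with h | h <;> simp [h]
  rw [sum_Ico_eq_sum_range]
  calc ∑ i ∈ range (N - 1 - 1), ‖slopeVec x y (1 + i) - slopeVec x y (1 + i - 1)‖
      = ∑ i ∈ range (N - 2), ‖∑ k, (σ k (i + 1) - σ k i) • θ.v k‖ := by
        refine sum_congr (by rw [Nat.sub_sub]) fun i hi => ?_
        rw [mem_range] at hi
        rw [add_comm 1 i, Nat.add_sub_cancel, hs i (by omega), hs (i + 1) (by omega)]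
        simp only [sub_smul, sum_sub_distrib, add_sub_add_right_eq_sub]
    _ ≤ ∑ i ∈ range (N - 2), ∑ k, |σ k (i + 1) - σ k i| * ‖θ.v k‖ :=
        sum_le_sum fun i _ =>
          (norm_sum_le _ _).trans_eq (by simp only [norm_smul, Real.norm_eq_abs])
    _ = ∑ k, (∑ i ∈ range (N - 2), |σ k (i + 1) - σ k i|) * ‖θ.v k‖ := by
        rw [sum_comm]
        simp only [sum_mul]
    _ ≤ cost θ := sum_le_sum fun k _ => mul_le_of_le_one_left (norm_nonneg _) (hvar k)

lemma monotoneOn_Iio_of_lt_succ {x : ℕ → ℝ} {N : ℕ} (hx : ∀ i, i + 1 < N → x i < x (i + 1)) :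
    MonotoneOn x (Set.Iio N) := fun a ha b hb hab =>
  (strictMonoOn_Iic_of_lt_succ (n := N - 1) fun m hm => by
    simpa only [Order.succ_eq_add_one] using hx m (by omega)).monotoneOn
    (show a ≤ N - 1 by rw [Set.mem_Iio] at ha; omega)
    (show b ≤ N - 1 by rw [Set.mem_Iio] at hb; omega) hab

lemma sum_Ico_one_sub_pred {G : Type*} [AddCommGroup G] (f : ℕ → G) (n : ℕ) :
    ∑ i ∈ Ico 1 (n + 1), (f i - f (i - 1)) = f n - f 0 := by
  rw [← sum_Ico_add' (fun i => f i - f (i - 1)) 0 n 1]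
  simpa only [Nat.add_sub_cancel] using sum_Ico_sub f (Nat.zero_le n)

lemma ctd_succ_sub_ctd {T N : ℕ} {x : ℕ → ℝ} (y : ℕ → EuclideanSpace ℝ (Fin T))
    (hx : MonotoneOn x (Set.Iio N)) {l : ℕ} (hl : l + 1 < N) :
    ctd N x y (x (l + 1)) - ctd N x y (x l) = (x (l + 1) - x l) • slopeVec x y l := by
  have hl' : x l ≤ x (l + 1) := hx (show l < N by omega) hl (Nat.le_succ l)
  have hkink : ∀ i ∈ Ico 1 (N - 1),
      max (x (l + 1) - x i) 0 - max (x l - x i) 0 = if i < l + 1 then x (l + 1) - x l else 0 := by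
    intro i hi
    rw [mem_Ico] at hi
    split_ifs with h
    · have : x i ≤ x l := hx (show i < N by omega) (show l < N by omega) (by omega)
      rw [max_eq_left (by linarith), max_eq_left (by linarith)]
      ring
    · have : x (l + 1) ≤ x i := hx hl (show i < N by omega) (by omega)
      rw [max_eq_right (by linarith), max_eq_right (by linarith), sub_zero]
  have hfilter : {i ∈ Ico 1 (N - 1) | i < l + 1} = Ico 1 (l + 1) := by
    ext i
    simp only [mem_filter, mem_Ico]
    omega
  calc ctd N x y (x (l + 1)) - ctd N x y (x l)
      = (x (l + 1) - x l) • slopeVec x y 0 + ∑ i ∈ Ico 1 (N - 1),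
          (max (x (l + 1) - x i) 0 - max (x l - x i) 0) •
            (slopeVec x y i - slopeVec x y (i - 1)) := by
        simp only [ctd, sub_smul, sum_sub_distrib]
        abel
    _ = (x (l + 1) - x l) • slopeVec x y l := by
        rw [sum_congr rfl fun i hi => by rw [hkink i hi, ite_smul, zero_smul],
          ← sum_filter, hfilter, ← smul_sum, sum_Ico_one_sub_pred, ← smul_add, add_sub_cancel]

theorem ctd_interpolates {T N : ℕ} {x : ℕ → ℝ} (y : ℕ → EuclideanSpace ℝ (Fin T))
    (hx : ∀ i, i + 1 < N → x i < x (i + 1)) {l : ℕ} (hl : l < N) : ctd N x y (x l) = y l := by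
  have hmono := monotoneOn_Iio_of_lt_succ hx
  induction l with
  | zero =>
    refine (add_eq_left.2 (sum_eq_zero fun i hi => ?_)).trans (by simp)
    rw [mem_Ico] at hi
    rw [max_eq_right (sub_nonpos.2 (hmono hl (show i < N by omega) (Nat.zero_le i))), zero_smul]
  | succ l ih =>
    rw [← sub_add_cancel (ctd N x y _) (ctd N x y (x l)), ctd_succ_sub_ctd y hmono hl,
      ih (by omega), slopeVec, smul_smul, mul_inv_cancel₀ (sub_pos.2 (hx l hl)).ne', one_smul,
      sub_add_cancel]

lemma sum_fin_ite_lt {M : Type*} [AddCommMonoid M] {n K : ℕ} (h : n ≤ K) (f : ℕ → M) :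
    ∑ k : Fin K, (if (k : ℕ) < n then f k else 0) = ∑ j ∈ range n, f j := by
  rw [Fin.sum_univ_eq_sum_range (fun k => if k < n then f k else 0), ← sum_filter]
  congr 1
  ext j
  simp only [mem_filter, mem_range]
  omega

namespace ReLUParams

def ofKinks {T K : ℕ} (n : ℕ) (knot : ℕ → ℝ) (kink : ℕ → EuclideanSpace ℝ (Fin T))
    (A c : EuclideanSpace ℝ (Fin T)) : ReLUParams T K where
  v k := if (k : ℕ) < n then kink k else 0
  w _ := 1
  b k := -knot k
  A := A
  c := c
  hw _ := Or.inl rfl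

variable {T K n : ℕ} {knot : ℕ → ℝ} {kink : ℕ → EuclideanSpace ℝ (Fin T)}
  {A c : EuclideanSpace ℝ (Fin T)}

lemma nnFun_ofKinks (hn : n ≤ K) (t : ℝ) :
    nnFun (ofKinks n knot kink A c : ReLUParams T K) t =
      ∑ j ∈ range n, max (t - knot j) 0 • kink j + t • A + c := by
  simp only [nnFun, ofKinks, ← sum_fin_ite_lt hn, smul_ite, smul_zero, one_mul, ← sub_eq_add_neg]

lemma cost_ofKinks (hn : n ≤ K) :
    cost (ofKinks n knot kink A c : ReLUParams T K) = ∑ j ∈ range n, ‖kink j‖ := by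
  simp only [cost, ofKinks, ← sum_fin_ite_lt hn, apply_ite, norm_zero]

end ReLUParams

def tent (a b t : ℝ) : ℝ := max (t - a) 0 - 2 * max (t - (a + b) / 2) 0 + max (t - b) 0

lemma tent_eq_zero {a b t : ℝ} (hab : a ≤ b) (ht : t ≤ a ∨ b ≤ t) : tent a b t = 0 := by
  rcases ht with ht | ht
  · rw [tent, max_eq_right (by linarith), max_eq_right (by linarith), max_eq_right (by linarith)]
    ring
  · rw [tent, max_eq_left (by linarith), max_eq_left (by linarith), max_eq_left (by linarith)]
    ring

lemma tent_midpoint {a b : ℝ} (hab : a ≤ b) : tent a b ((a + b) / 2) = (b - a) / 2 := by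
  rw [tent, max_eq_left (by linarith), sub_self, max_eq_left le_rfl, max_eq_right (by linarith)]
  ring

section TentPerturbation

variable {T K N : ℕ} {x : ℕ → ℝ} {y : ℕ → EuclideanSpace ℝ (Fin T)} {i : ℕ}
  {w : EuclideanSpace ℝ (Fin T)}

/-- Neuron `0` carries the new kink `2 • w` at the midpoint of `[x i, x (i + 1)]`, neuron `j ≥ 1`
the kink of `ctd` at `x j`. -/
def tentPerturbation (N : ℕ) (x : ℕ → ℝ) (y : ℕ → EuclideanSpace ℝ (Fin T)) (i : ℕ)
    (w : EuclideanSpace ℝ (Fin T)) : ReLUParams T K :=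
  .ofKinks (N - 1) (fun j => if j = 0 then (x i + x (i + 1)) / 2 else x j)
    (fun j => if j = 0 then (2 : ℝ) • w else
      slopeVec x y j - slopeVec x y (j - 1) - if j ∈ ({i, i + 1} : Finset ℕ) then w else 0)
    (slopeVec x y 0) (y 0 - x 0 • slopeVec x y 0)

lemma pair_succ_subset_Ico (hi : 1 ≤ i) (hiN : i + 3 ≤ N) :
    ({i, i + 1} : Finset ℕ) ⊆ Ico 1 (N - 1) := by
  intro j hj
  simp only [mem_insert, mem_singleton] at hj
  simp only [mem_Ico]
  omega

lemma nnFun_tentPerturbation (hK : N - 1 ≤ K) (hi : 1 ≤ i) (hiN : i + 3 ≤ N) (t : ℝ) :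
    nnFun (tentPerturbation N x y i w : ReLUParams T K) t =
      ctd N x y t - tent (x i) (x (i + 1)) t • w := by
  rw [tentPerturbation, ReLUParams.nnFun_ofKinks hK, range_eq_Ico,
    sum_eq_sum_Ico_succ_bot (by omega), if_pos rfl, if_pos rfl,
    sum_congr rfl fun j hj => by
      rw [if_neg (Nat.one_le_iff_ne_zero.1 (mem_Ico.1 hj).1),
        if_neg (Nat.one_le_iff_ne_zero.1 (mem_Ico.1 hj).1), smul_sub, smul_ite, smul_zero],
    sum_sub_distrib, sum_ite_mem, inter_eq_right.2 (pair_succ_subset_Ico hi hiN),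
    sum_pair (by omega), ctd, tent]
  module

lemma cost_tentPerturbation (hK : N - 1 ≤ K) (hi : 1 ≤ i) (hiN : i + 3 ≤ N)
    (h₁ : SameRay ℝ (slopeVec x y i - slopeVec x y (i - 1)) w)
    (h₂ : SameRay ℝ (slopeVec x y (i + 1) - slopeVec x y i) w)
    (hw₁ : ‖w‖ ≤ ‖slopeVec x y i - slopeVec x y (i - 1)‖)
    (hw₂ : ‖w‖ ≤ ‖slopeVec x y (i + 1) - slopeVec x y i‖) :
    cost (tentPerturbation N x y i w : ReLUParams T K) =
      ∑ j ∈ Ico 1 (N - 1), ‖slopeVec x y j - slopeVec x y (j - 1)‖ := by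
  have hkink : ∀ j, ‖slopeVec x y j - slopeVec x y (j - 1) -
      if j ∈ ({i, i + 1} : Finset ℕ) then w else 0‖ =
      ‖slopeVec x y j - slopeVec x y (j - 1)‖ - if j ∈ ({i, i + 1} : Finset ℕ) then ‖w‖ else 0 := by
    intro j
    split_ifs with hj
    · rcases mem_insert.1 hj with rfl | hj
      · rw [h₁.norm_sub, abs_of_nonneg (sub_nonneg.2 hw₁)]
      · rw [mem_singleton.1 hj, Nat.add_sub_cancel, h₂.norm_sub, abs_of_nonneg (sub_nonneg.2 hw₂)]
    · rw [sub_zero, sub_zero]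
  rw [tentPerturbation, ReLUParams.cost_ofKinks hK, range_eq_Ico,
    sum_eq_sum_Ico_succ_bot (by omega), if_pos rfl,
    sum_congr rfl fun j hj => by rw [if_neg (Nat.one_le_iff_ne_zero.1 (mem_Ico.1 hj).1), hkink],
    sum_sub_distrib, sum_ite_mem, inter_eq_right.2 (pair_succ_subset_Ico hi hiN),
    sum_pair (by omega), norm_smul, Real.norm_two]
  ring

theorem isMinimizer_tentPerturbation (hx : ∀ i, i + 1 < N → x i < x (i + 1)) (hK : N - 1 ≤ K)
    (hi : 1 ≤ i) (hiN : i + 3 ≤ N)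
    (h₁ : SameRay ℝ (slopeVec x y i - slopeVec x y (i - 1)) w)
    (h₂ : SameRay ℝ (slopeVec x y (i + 1) - slopeVec x y i) w)
    (hw₁ : ‖w‖ ≤ ‖slopeVec x y i - slopeVec x y (i - 1)‖)
    (hw₂ : ‖w‖ ≤ ‖slopeVec x y (i + 1) - slopeVec x y i‖) :
    IsMinimizer N x y (tentPerturbation N x y i w : ReLUParams T K) := by
  have hmono := monotoneOn_Iio_of_lt_succ hx
  refine ⟨fun l hl => ?_, fun θ hθ => ?_⟩
  · have hl' : x l ≤ x i ∨ x (i + 1) ≤ x l := by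
      rcases le_or_gt l i with h | h
      · exact .inl (hmono hl (show i < N by omega) h)
      · exact .inr (hmono (show i + 1 < N by omega) hl h)
    rw [nnFun_tentPerturbation hK hi hiN, ctd_interpolates y hx hl,
      tent_eq_zero (hx i (by omega)).le hl', zero_smul, sub_zero]
  · rw [cost_tentPerturbation hK hi hiN h₁ h₂ hw₁ hw₂]
    exact sum_norm_slopeVec_sub_le_cost (by omega) hx hθ

lemma injective_nnFun_tentPerturbation (hK : N - 1 ≤ K) (hi : 1 ≤ i) (hiN : i + 3 ≤ N)
    (hxi : x i < x (i + 1)) {v : EuclideanSpace ℝ (Fin T)} (hv : v ≠ 0) :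
    Function.Injective fun ε : ℝ => nnFun (tentPerturbation N x y i (ε • v) : ReLUParams T K) := by
  intro a b hab
  have hmid := congrFun hab ((x i + x (i + 1)) / 2)
  simp only [nnFun_tentPerturbation hK hi hiN, tent_midpoint hxi.le, sub_right_inj,
    smul_smul] at hmid
  exact mul_left_cancel₀ (by linarith) (smul_left_injective ℝ hv hmid)

end TentPerturbation

theorem nonunique_solutions_general {T K N : ℕ} (hK : N - 1 ≤ K)
    (x : ℕ → ℝ) (y : ℕ → EuclideanSpace ℝ (Fin T))
    (hx : ∀ i, i + 1 < N → x i < x (i + 1))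
    (hcond : ∃ i : ℕ, 1 ≤ i ∧ i + 3 ≤ N ∧
      slopeVec x y i - slopeVec x y (i - 1) ≠ 0 ∧
      slopeVec x y (i + 1) - slopeVec x y i ≠ 0 ∧
      Aligned (slopeVec x y i - slopeVec x y (i - 1))
        (slopeVec x y (i + 1) - slopeVec x y i)) :
    {f : ℝ → EuclideanSpace ℝ (Fin T) |
      ∃ θ : ReLUParams T K, IsMinimizer N x y θ ∧ f = nnFun θ}.Infinite := by
  obtain ⟨i, hi, hiN, hδ₁, hδ₂, hal⟩ := hcond
  set δ₁ := slopeVec x y i - slopeVec x y (i - 1)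
  set δ₂ := slopeVec x y (i + 1) - slopeVec x y i
  have hray : SameRay ℝ δ₂ δ₁ := sameRay_iff_norm_smul_eq.2 (inner_eq_norm_mul_iff_real.1 hal)
  have hn₁ : 0 < ‖δ₁‖ := norm_pos_iff.2 hδ₁
  set ε₀ := min 1 (‖δ₂‖ / ‖δ₁‖)
  have hε₀ : 0 < ε₀ := lt_min one_pos (div_pos (norm_pos_iff.2 hδ₂) hn₁)
  have hmin : ∀ ε ∈ Set.Ioo 0 ε₀,
      IsMinimizer N x y (tentPerturbation N x y i (ε • δ₁) : ReLUParams T K) := by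
    rintro ε ⟨hε, hεε₀⟩
    have hnorm : ‖ε • δ₁‖ = ε * ‖δ₁‖ := by rw [norm_smul, Real.norm_of_nonneg hε.le]
    refine isMinimizer_tentPerturbation hx hK hi hiN (SameRay.sameRay_nonneg_smul_right δ₁ hε.le)
      (hray.nonneg_smul_right hε.le) ?_ ?_ <;> rw [hnorm]
    · exact mul_le_of_le_one_left hn₁.le (hεε₀.le.trans (min_le_left _ _))
    · exact (le_div_iff₀ hn₁).1 (hεε₀.le.trans (min_le_right _ _))
  exact ((Set.Ioo_infinite hε₀).image
    (injective_nnFun_tentPerturbation hK hi hiN (hx i (by omega)) hδ₁).injOn).mono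
    (Set.image_subset_iff.2 fun ε hε => ⟨_, hmin ε hε, rfl⟩)

/-- If for some (1-indexed) `i ∈ {2, …, N−2}` the vectors
`sᵢ − s_{i−1}` and `s_{i+1} − sᵢ` are both nonzero and aligned (0-indexed:
some `i` with `1 ≤ i` and `i + 3 ≤ N`), then the set of functions represented by
parameter sets attaining the minimum of problem (P) is infinite; in particular,
the solution to problem (P) is non-unique. -/
theorem nonunique_solutions {T K N : ℕ} (hT : 1 ≤ T) (hN : 4 ≤ N) (hK : N - 1 ≤ K)
    (x : ℕ → ℝ) (y : ℕ → EuclideanSpace ℝ (Fin T))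
    (hx : ∀ i, i + 1 < N → x i < x (i + 1))
    (hcond : ∃ i : ℕ, 1 ≤ i ∧ i + 3 ≤ N ∧
      slopeVec x y i - slopeVec x y (i - 1) ≠ 0 ∧
      slopeVec x y (i + 1) - slopeVec x y i ≠ 0 ∧
      Aligned (slopeVec x y i - slopeVec x y (i - 1))
        (slopeVec x y (i + 1) - slopeVec x y i)) :
    {f : ℝ → EuclideanSpace ℝ (Fin T) |
      ∃ θ : ReLUParams T K, IsMinimizer N x y θ ∧ f = nnFun θ}.Infinite :=
  nonunique_solutions_general hK x y hx hcond

end
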